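/- Let X be an absolutely continuous nonnegative random variable with finite second moment, pdf f and cdf F with F(x) > 0 for all x > 0, and define the sequence F_1 = F, f_1 = f, T_n(x) = −log F_n(x), F_{n+1}(x) = F_n(x)(1 + T_n(x)), f_{n+1}(x) = T_n(x)·f_n(x), with mean inactivity time μ̃_n(t) = (1/F_n(t))·∫_0^t F_n(x) dx. Consider the pair (X_n, X_{n+1}) with joint law given by [X_{n+1} | X_n = t] =_d [X_n | X_n ≤ t], so that E[X_n·X_{n+1}] = ∫_0^∞ t·(t − μ̃_n(t))·f_n(t) dt. Then for every n = 1, 2, …, Cov(X_n, X_{n+1}) = Var(X_n) − Cov(X_n, μ̃_n(X_n)), where Cov(X_n, X_{n+1}) = E[X_n·X_{n+1}] − E(X_n)·E(X_{n+1}), Cov(X_n, μ̃_n(X_n)) = E[X_n·μ̃_n(X_n)] − E(X_n)·E[μ̃_n(X_n)], and E(X_{n+1}) = E(X_n) − CE(X_n) with CE(X_n) = −∫_0^∞ F_n(x)·log F_n(x) dx = E[μ̃_n(X_n)]. -/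

import Mathlib

/-!
With `μ̃ = meanInactivityTime F`, put `H(t) = -log F(t) · ∫₀ᵗ F = -F(t) log F(t) · μ̃(t)`.
Then `H' = -F log F - μ̃ f` and `0 ≤ H(t) ≤ t (1 - F t) ≤ ∫ₜ^∞ x f(x) dx`, so `H` vanishes at
both ends of `(0, ∞)` and `E[μ̃(X)] = CE(X)`. This turns `E(X_{n+1})` into `E(X_n) - E[μ̃_n(X_n)]`;
with `E[X_n X_{n+1}] = E[X_n²] - E[X_n μ̃_n(X_n)]` the covariance identity is a rearrangement.
The hypotheses on `F` pass to every `F_n` because `y (1 - log y)` lies in `(0, 1]` for `y ∈ (0, 1]`.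
-/

open MeasureTheory Set Filter Real Topology

theorem tendsto_setIntegral_Ioi_atTop {g : ℝ → ℝ} {a : ℝ} (hg : IntegrableOn g (Ioi a)) :
    Tendsto (fun b => ∫ x in Ioi b, g x) atTop (𝓝 0) := by
  have hempty : (⋂ b : ℝ, Ioi b) = ∅ := iInter_eq_empty_iff.2 fun x => ⟨x, lt_irrefl x⟩
  simpa [hempty] using
    tendsto_setIntegral_of_antitone (fun _ => measurableSet_Ioi) antitone_Ioi ⟨a, hg⟩

/-- `F` is the distribution function, with density `f`, of a positive lifetime with `F > 0` on
`(0, ∞)`; only that half-line is constrained, since `log F` is meaningless where `F` vanishes. -/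
structure IsLifetimeCDF (F f : ℝ → ℝ) : Prop where
  pos : ∀ x, 0 < x → 0 < F x
  le_one : ∀ x, 0 < x → F x ≤ 1
  hasDerivAt : ∀ x, 0 < x → HasDerivAt F (f x) x
  density_nonneg : ∀ x, 0 < x → 0 ≤ f x
  aemeasurable_density : AEMeasurable f (volume.restrict (Ioi 0))
  tendsto_atTop : Tendsto F atTop (𝓝 1)

noncomputable def meanInactivityTime (F : ℝ → ℝ) (t : ℝ) : ℝ :=
  (1 / F t) * ∫ y in (0:ℝ)..t, F y

namespace IsLifetimeCDF

variable {F f : ℝ → ℝ} (hF : IsLifetimeCDF F f)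
include hF

theorem continuousOn : ContinuousOn F (Ioi 0) :=
  fun t ht => (hF.hasDerivAt t ht).continuousAt.continuousWithinAt

theorem monotoneOn : MonotoneOn F (Ioi 0) := by
  refine monotoneOn_of_hasDerivWithinAt_nonneg (f' := f) (convex_Ioi 0) hF.continuousOn ?_ ?_ <;>
    rw [interior_Ioi]
  · exact fun x hx => (hF.hasDerivAt x hx).hasDerivWithinAt
  · exact hF.density_nonneg

theorem neg_log_nonneg {x : ℝ} (hx : 0 < x) : 0 ≤ -log (F x) :=
  neg_nonneg.2 (log_nonpos (hF.pos x hx).le (hF.le_one x hx))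

theorem succ : IsLifetimeCDF (fun x => F x * (1 + -log (F x))) (fun x => -log (F x) * f x) where
  pos x hx := mul_pos (hF.pos x hx) (by linarith [hF.neg_log_nonneg hx])
  le_one x hx := by
    have := negMulLog_le_one_sub_self (hF.pos x hx).le
    rw [negMulLog] at this
    linarith
  hasDerivAt x hx := by
    have hlog : HasDerivAt (fun y => 1 + -log (F y)) (-(f x / F x)) x :=
      ((hF.hasDerivAt x hx).log (hF.pos x hx).ne').neg.const_add 1
    refine ((hF.hasDerivAt x hx).mul hlog).congr_deriv ?_
    field_simp [(hF.pos x hx).ne']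
    ring
  density_nonneg x hx := mul_nonneg (hF.neg_log_nonneg hx) (hF.density_nonneg x hx)
  aemeasurable_density :=
    (measurable_log.comp_aemeasurable (hF.continuousOn.aemeasurable measurableSet_Ioi)).neg.mul
      hF.aemeasurable_density
  tendsto_atTop := by
    have hlog : Tendsto (fun x => log (F x)) atTop (𝓝 0) := by
      simpa using hF.tendsto_atTop.log one_ne_zero
    simpa using hF.tendsto_atTop.mul (hlog.neg.const_add 1)

theorem integrableOn_Ioc (t : ℝ) : IntegrableOn F (Ioc 0 t) := by
  refine Integrable.mono' (integrable_const 1)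
    ((hF.continuousOn.mono Ioc_subset_Ioi_self).aestronglyMeasurable measurableSet_Ioc) ?_
  filter_upwards [ae_restrict_mem measurableSet_Ioc] with x hx
  rw [Real.norm_eq_abs, abs_of_pos (hF.pos x hx.1)]
  exact hF.le_one x hx.1

theorem hasDerivAt_integral {t : ℝ} (ht : 0 < t) :
    HasDerivAt (fun u => ∫ y in (0:ℝ)..u, F y) (F t) t :=
  intervalIntegral.integral_hasDerivAt_right
    ((intervalIntegrable_iff_integrableOn_Ioc_of_le ht.le).2 (hF.integrableOn_Ioc t))
    (hF.continuousOn.stronglyMeasurableAtFilter isOpen_Ioi t ht) (hF.hasDerivAt t ht).continuousAt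

theorem integral_nonneg {t : ℝ} (ht : 0 ≤ t) : 0 ≤ ∫ y in (0:ℝ)..t, F y := by
  rw [intervalIntegral.integral_of_le ht]
  exact setIntegral_nonneg measurableSet_Ioc fun x hx => (hF.pos x hx.1).le

theorem integral_le_mul {t : ℝ} (ht : 0 ≤ t) : ∫ y in (0:ℝ)..t, F y ≤ t * F t := by
  rw [intervalIntegral.integral_of_le ht]
  calc ∫ y in Ioc 0 t, F y ≤ ∫ _ in Ioc 0 t, F t :=
        setIntegral_mono_on (hF.integrableOn_Ioc t) (by simp) measurableSet_Ioc
          fun x hx => hF.monotoneOn hx.1 (hx.1.trans_le hx.2) hx.2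
    _ = t * F t := by simp [ht]

theorem meanInactivityTime_nonneg {t : ℝ} (ht : 0 < t) : 0 ≤ meanInactivityTime F t :=
  mul_nonneg (one_div_nonneg.2 (hF.pos t ht).le) (hF.integral_nonneg ht.le)

theorem meanInactivityTime_le {t : ℝ} (ht : 0 < t) : meanInactivityTime F t ≤ t := by
  rw [meanInactivityTime, one_div_mul_eq_div, div_le_iff₀ (hF.pos t ht)]
  exact hF.integral_le_mul ht.le

theorem continuousOn_meanInactivityTime : ContinuousOn (meanInactivityTime F) (Ioi 0) :=
  (continuousOn_const.div hF.continuousOn fun t ht => (hF.pos t ht).ne').mul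
    fun _ ht => (hF.hasDerivAt_integral ht).continuousAt.continuousWithinAt

theorem integrableOn_mul_meanInactivityTime_mul {w : ℝ → ℝ}
    (hw : AEMeasurable w (volume.restrict (Ioi 0))) (hw0 : ∀ t, 0 < t → 0 ≤ w t)
    (h : IntegrableOn (fun t => w t * t * f t) (Ioi 0)) :
    IntegrableOn (fun t => w t * meanInactivityTime F t * f t) (Ioi 0) := by
  refine h.mono' ((hw.mul (hF.continuousOn_meanInactivityTime.aemeasurable measurableSet_Ioi)).mul
    hF.aemeasurable_density).aestronglyMeasurable ?_
  filter_upwards [ae_restrict_mem measurableSet_Ioi] with t (ht : 0 < t)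
  have hwt := hw0 t ht
  have hft := hF.density_nonneg t ht
  have hμ := hF.meanInactivityTime_nonneg ht
  rw [Real.norm_eq_abs, abs_of_nonneg (by positivity)]
  gcongr
  exact hF.meanInactivityTime_le ht

theorem integrableOn_density_Ioi (hmean : IntegrableOn (fun t => t * f t) (Ioi 0)) {b : ℝ}
    (hb : 0 < b) : IntegrableOn f (Ioi b) := by
  refine ((hmean.mono_set (Ioi_subset_Ioi hb.le)).const_mul b⁻¹).mono'
    (hF.aemeasurable_density.mono_measure (Measure.restrict_mono (Ioi_subset_Ioi hb.le) le_rfl)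
      ).aestronglyMeasurable ?_
  filter_upwards [ae_restrict_mem measurableSet_Ioi] with t (ht : b < t)
  have hf := hF.density_nonneg t (hb.trans ht)
  rw [Real.norm_eq_abs, abs_of_nonneg hf, le_inv_mul_iff₀ hb]
  gcongr

theorem integral_density_Ioi (hmean : IntegrableOn (fun t => t * f t) (Ioi 0)) {b : ℝ}
    (hb : 0 < b) : ∫ t in Ioi b, f t = 1 - F b :=
  integral_Ioi_of_hasDerivAt_of_tendsto (hF.hasDerivAt b hb).continuousAt.continuousWithinAt
    (fun t ht => hF.hasDerivAt t (hb.trans ht)) (hF.integrableOn_density_Ioi hmean hb)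
    hF.tendsto_atTop

theorem mul_one_sub_le_setIntegral_Ioi (hmean : IntegrableOn (fun t => t * f t) (Ioi 0)) {b : ℝ}
    (hb : 0 < b) : b * (1 - F b) ≤ ∫ t in Ioi b, t * f t := by
  rw [← hF.integral_density_Ioi hmean hb, ← integral_const_mul]
  exact setIntegral_mono_on ((hF.integrableOn_density_Ioi hmean hb).const_mul b)
    (hmean.mono_set (Ioi_subset_Ioi hb.le)) measurableSet_Ioi
    fun t ht => mul_le_mul_of_nonneg_right ht.le (hF.density_nonneg t (hb.trans ht))

theorem hasDerivAt_neg_log_mul_integral {t : ℝ} (ht : 0 < t) :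
    HasDerivAt (fun u => -log (F u) * ∫ y in (0:ℝ)..u, F y)
      (-(F t * log (F t)) - meanInactivityTime F t * f t) t := by
  have hlog : HasDerivAt (fun u => -log (F u)) (-(f t / F t)) t :=
    ((hF.hasDerivAt t ht).log (hF.pos t ht).ne').neg
  refine (hlog.mul (hF.hasDerivAt_integral ht)).congr_deriv ?_
  rw [meanInactivityTime]
  field_simp [(hF.pos t ht).ne']
  ring

theorem neg_log_mul_integral_le {t : ℝ} (ht : 0 < t) :
    -log (F t) * ∫ y in (0:ℝ)..t, F y ≤ t * (1 - F t) :=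
  calc -log (F t) * ∫ y in (0:ℝ)..t, F y ≤ -log (F t) * (t * F t) :=
        mul_le_mul_of_nonneg_left (hF.integral_le_mul ht.le) (hF.neg_log_nonneg ht)
    _ = t * negMulLog (F t) := by rw [negMulLog]; ring
    _ ≤ t * (1 - F t) := by gcongr; exact negMulLog_le_one_sub_self (hF.pos t ht).le

theorem integral_meanInactivityTime_mul (hmean : IntegrableOn (fun t => t * f t) (Ioi 0))
    (hCE : IntegrableOn (fun x => F x * log (F x)) (Ioi 0)) :
    ∫ t in Ioi 0, meanInactivityTime F t * f t = -∫ x in Ioi 0, F x * log (F x) := by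
  set H : ℝ → ℝ := fun u => -log (F u) * ∫ y in (0:ℝ)..u, F y
  have hH0 : H 0 = 0 := by simp [H]
  have hH_nonneg : ∀ t, 0 < t → 0 ≤ H t := fun t ht =>
    mul_nonneg (hF.neg_log_nonneg ht) (hF.integral_nonneg ht.le)
  have hH_right : ContinuousWithinAt H (Ici 0) 0 := by
    rw [← continuousWithinAt_Ioi_iff_Ici, ContinuousWithinAt, hH0]
    refine tendsto_of_tendsto_of_tendsto_of_le_of_le' tendsto_const_nhds
      (tendsto_id.mono_left nhdsWithin_le_nhds) ?_ ?_ <;>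
      filter_upwards [self_mem_nhdsWithin] with t (ht : 0 < t)
    · exact hH_nonneg t ht
    · show H t ≤ t
      linarith [hF.neg_log_mul_integral_le ht, mul_pos ht (hF.pos t ht)]
  have hH_atTop : Tendsto H atTop (𝓝 0) := by
    refine tendsto_of_tendsto_of_tendsto_of_le_of_le' tendsto_const_nhds
      (tendsto_setIntegral_Ioi_atTop hmean) ?_ ?_ <;>
      filter_upwards [eventually_gt_atTop 0] with b hb
    · exact hH_nonneg b hb
    · exact (hF.neg_log_mul_integral_le hb).trans (hF.mul_one_sub_le_setIntegral_Ioi hmean hb)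
  have hμf : IntegrableOn (fun t => meanInactivityTime F t * f t) (Ioi 0) := by
    simpa using hF.integrableOn_mul_meanInactivityTime_mul aemeasurable_const
      (fun _ _ => zero_le_one) (by simpa using hmean)
  have hnegCE : IntegrableOn (fun x => -(F x * log (F x))) (Ioi 0) := hCE.neg
  have hFTC := integral_Ioi_of_hasDerivAt_of_tendsto hH_right
    (fun t ht => hF.hasDerivAt_neg_log_mul_integral ht) (hnegCE.sub hμf) hH_atTop
  rw [integral_sub hnegCE hμf, integral_neg, hH0] at hFTC
  linarith

theorem integral_mul_sub_meanInactivityTime_mul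
    (hmom2 : IntegrableOn (fun t => t ^ 2 * f t) (Ioi 0)) :
    ∫ t in Ioi 0, t * (t - meanInactivityTime F t) * f t
      = (∫ t in Ioi 0, t ^ 2 * f t) - ∫ t in Ioi 0, t * meanInactivityTime F t * f t := by
  rw [← integral_sub hmom2 (hF.integrableOn_mul_meanInactivityTime_mul aemeasurable_id'
    (fun _ ht => ht.le) (by simpa only [sq] using hmom2))]
  congr 1 with t
  ring

end IsLifetimeCDF

theorem isLifetimeCDF_seq {Fn fn : ℕ → ℝ → ℝ} (h1 : IsLifetimeCDF (Fn 1) (fn 1))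
    (hFrec : ∀ n, 1 ≤ n → ∀ x, Fn (n + 1) x = Fn n x * (1 + (-log (Fn n x))))
    (hfrec : ∀ n, 1 ≤ n → ∀ x, fn (n + 1) x = (-log (Fn n x)) * fn n x) :
    ∀ n, 1 ≤ n → IsLifetimeCDF (Fn n) (fn n) :=
  Nat.le_induction h1 fun n hn ih => by
    rw [funext (hFrec n hn), funext (hfrec n hn)]
    exact ih.succ

theorem seq_covariance_identity_general
    (F f : ℝ → ℝ) (Fn fn : ℕ → ℝ → ℝ)
    (hderiv : ∀ x, 0 < x → HasDerivAt F (f x) x)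
    (hf : ∀ x, 0 ≤ f x) (hfm : Measurable f)
    (hFpos : ∀ x, 0 < x → 0 < F x)
    (hFle : ∀ x, F x ≤ 1)
    (hFlim : Tendsto F atTop (nhds 1))
    (hF1 : ∀ x, Fn 1 x = F x)
    (hf1 : ∀ x, fn 1 x = f x)
    (hFrec : ∀ n, 1 ≤ n → ∀ x, Fn (n + 1) x = Fn n x * (1 + (-Real.log (Fn n x))))
    (hfrec : ∀ n, 1 ≤ n → ∀ x, fn (n + 1) x = (-Real.log (Fn n x)) * fn n x)
    (hmean : ∀ n, 1 ≤ n → IntegrableOn (fun x => x * fn n x) (Ioi 0))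
    (hmom2 : ∀ n, 1 ≤ n → IntegrableOn (fun x => x ^ 2 * fn n x) (Ioi 0))
    (hCE : ∀ n, 1 ≤ n → IntegrableOn (fun x => Fn n x * Real.log (Fn n x)) (Ioi 0)) :
    ∀ n, 1 ≤ n →
      -- Cov(X_n, X_{n+1}) = E[X_n X_{n+1}] - E(X_n) E(X_{n+1})
      (∫ t in Ioi 0, t * (t - (1 / Fn n t) * ∫ y in (0:ℝ)..t, Fn n y) * fn n t)
          - (∫ t in Ioi 0, t * fn n t) *
              ((∫ t in Ioi 0, t * fn n t)
                - (-∫ x in Ioi 0, Fn n x * Real.log (Fn n x)))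
        = -- Var(X_n)
          ((∫ t in Ioi 0, t ^ 2 * fn n t) - (∫ t in Ioi 0, t * fn n t) ^ 2)
            -- minus Cov(X_n, μ̃_n(X_n))
            - ((∫ t in Ioi 0, t * ((1 / Fn n t) * ∫ y in (0:ℝ)..t, Fn n y) * fn n t)
                - (∫ t in Ioi 0, t * fn n t) *
                    (∫ t in Ioi 0, ((1 / Fn n t) * ∫ y in (0:ℝ)..t, Fn n y) * fn n t)) := by
  intro n hn
  have h1 : IsLifetimeCDF (Fn 1) (fn 1) := by
    rw [funext hF1, funext hf1]
    exact ⟨hFpos, fun x _ => hFle x, hderiv, fun x _ => hf x, hfm.aemeasurable, hFlim⟩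
  have hF := isLifetimeCDF_seq h1 hFrec hfrec n hn
  have hmixed := hF.integral_mul_sub_meanInactivityTime_mul (hmom2 n hn)
  have hCEμ := hF.integral_meanInactivityTime_mul (hmean n hn) (hCE n hn)
  unfold meanInactivityTime at hmixed hCEμ
  rw [hmixed, hCEμ]
  ring

/-- With `μ̃_n(t) = (1/F_n(t)) ∫_0^t F_n(x) dx` and the pair
`(X_n, X_{n+1})` coupled via `[X_{n+1} | X_n = t] =_d [X_n | X_n ≤ t]`, so that
`E[X_n X_{n+1}] = ∫_0^∞ t (t - μ̃_n(t)) f_n(t) dt`, one has, for every `n ≥ 1`,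
`Cov(X_n, X_{n+1}) = Var(X_n) - Cov(X_n, μ̃_n(X_n))`, where
`E(X_{n+1}) = E(X_n) - CE(X_n)` and `CE(X_n) = -∫_0^∞ F_n log F_n = E[μ̃_n(X_n)]`. -/
theorem seq_covariance_identity
    (F f : ℝ → ℝ) (Fn fn : ℕ → ℝ → ℝ)
    (hFcont : Continuous F)
    (hderiv : ∀ x, 0 < x → HasDerivAt F (f x) x)
    (hf : ∀ x, 0 ≤ f x) (hfm : Measurable f)
    (hF0 : F 0 = 0)
    (hFmono : Monotone F)
    (hFpos : ∀ x, 0 < x → 0 < F x)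
    (hFle : ∀ x, F x ≤ 1)
    (hFlim : Tendsto F atTop (nhds 1))
    (hF1 : ∀ x, Fn 1 x = F x)
    (hf1 : ∀ x, fn 1 x = f x)
    (hFrec : ∀ n, 1 ≤ n → ∀ x, Fn (n + 1) x = Fn n x * (1 + (-Real.log (Fn n x))))
    (hfrec : ∀ n, 1 ≤ n → ∀ x, fn (n + 1) x = (-Real.log (Fn n x)) * fn n x)
    (hmean : ∀ n, 1 ≤ n → IntegrableOn (fun x => x * fn n x) (Ioi 0))
    (hmom2 : ∀ n, 1 ≤ n → IntegrableOn (fun x => x ^ 2 * fn n x) (Ioi 0))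
    (hCE : ∀ n, 1 ≤ n → IntegrableOn (fun x => Fn n x * Real.log (Fn n x)) (Ioi 0)) :
    ∀ n, 1 ≤ n →
      -- Cov(X_n, X_{n+1}) = E[X_n X_{n+1}] - E(X_n) E(X_{n+1})
      (∫ t in Ioi 0, t * (t - (1 / Fn n t) * ∫ y in (0:ℝ)..t, Fn n y) * fn n t)
          - (∫ t in Ioi 0, t * fn n t) *
              ((∫ t in Ioi 0, t * fn n t)
                - (-∫ x in Ioi 0, Fn n x * Real.log (Fn n x)))
        = -- Var(X_n)
          ((∫ t in Ioi 0, t ^ 2 * fn n t) - (∫ t in Ioi 0, t * fn n t) ^ 2)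
            -- minus Cov(X_n, μ̃_n(X_n))
            - ((∫ t in Ioi 0, t * ((1 / Fn n t) * ∫ y in (0:ℝ)..t, Fn n y) * fn n t)
                - (∫ t in Ioi 0, t * fn n t) *
                    (∫ t in Ioi 0, ((1 / Fn n t) * ∫ y in (0:ℝ)..t, Fn n y) * fn n t)) :=
  seq_covariance_identity_general F f Fn fn hderiv hf hfm hFpos hFle hFlim hF1 hf1 hFrec hfrec hmean
    hmom2 hCE
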